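/- Let (Y, d_Y) be a compact geodesic metric space and M > 0. Let d_ℓ be the induced length metric on X_M = Y × (0, M] associated to the Balogh–Schramm distance ρ. Then (X_M, d_ℓ) is hyperbolic in the sense of Gromov: there exists δ ≥ 0 such that for all x,y,z,t ∈ X_M, d_ℓ(x,y) + d_ℓ(z,t) ≤ max(d_ℓ(x,z) + d_ℓ(y,t), d_ℓ(x,t) + d_ℓ(y,z)) + 2δ. -/

import Mathlib

open Set

/-- The Balogh–Schramm distance on `Y × (0, ∞)`:
`ρ((p,s),(q,t)) = 2·log((d_Y(p,q) + max(s,t))/√(s·t))`. -/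
noncomputable def BS {Y : Type*} [MetricSpace Y] (x y : Y × ℝ) : ℝ :=
  2 * Real.log ((dist x.1 y.1 + max x.2 y.2) / Real.sqrt (x.2 * y.2))

/-- Length of the map `γ` over the set `S` with respect to the distance
function `d`: the supremum over finite monotone partitions in `S` of the sums
of consecutive distances (as in Mathlib's `eVariationOn`). -/
noncomputable def lengthOn {X : Type*} (d : X → X → ℝ) (γ : ℝ → X) (S : Set ℝ) : ENNReal :=
  ⨆ p : ℕ × { u : ℕ → ℝ // Monotone u ∧ ∀ i, u i ∈ S },
    ∑ i ∈ Finset.range p.1, ENNReal.ofReal (d (γ (p.2.1 i)) (γ (p.2.1 (i + 1))))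

/-- Membership in `X_M = Y × (0, M]`. -/
def inXM {Y : Type*} (M : ℝ) (x : Y × ℝ) : Prop := 0 < x.2 ∧ x.2 ≤ M

/-- The induced length metric on `X_M = Y × (0, M]`: the infimum of
Balogh–Schramm lengths of continuous paths joining `x` and `y` inside `X_M`. -/
noncomputable def dLen {Y : Type*} [MetricSpace Y] (M : ℝ) (x y : Y × ℝ) : ℝ :=
  (sInf {L : ENNReal | ∃ (a b : ℝ) (γ : ℝ → Y × ℝ), a ≤ b ∧
      ContinuousOn γ (Icc a b) ∧ γ a = x ∧ γ b = y ∧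
      (∀ t ∈ Icc a b, inXM M (γ t)) ∧
      lengthOn (BS (Y := Y)) γ (Icc a b) = L}).toReal

/-- A metric space is geodesic: any two points are joined by an isometric
embedding of `[0, dist p q]`. -/
def GeodesicSpace (Y : Type*) [MetricSpace Y] : Prop :=
  ∀ p q : Y, ∃ α : ℝ → Y, α 0 = p ∧ α (dist p q) = q ∧
    ∀ s ∈ Icc (0:ℝ) (dist p q), ∀ t ∈ Icc (0:ℝ) (dist p q), dist (α s) (α t) = |s - t|

/-- The Gromov product `(x,y)_ω` with respect to the length metric `dLen M`. -/
noncomputable def gromovProd {Y : Type*} [MetricSpace Y] (M : ℝ) (ω x y : Y × ℝ) : ℝ :=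
  (dLen M x ω + dLen M y ω - dLen M x y) / 2

/-!
Write `Q(x, y) = d_Y(p, q) + max(s, t)` (`bsGauge`), so that
`ρ(x, y) = 2 log Q(x, y) - log s - log t`. In the four-point condition for `ρ` the height terms
cancel, and what remains is the Ptolemy-type inequality
`Q(x,y) Q(z,w) ≤ 4 max(Q(x,z) Q(y,w), Q(x,w) Q(y,z))`, which holds for any function satisfying
the triangle inequality. Hence `ρ` is `log 4`-hyperbolic. The length metric satisfies
`ρ ≤ d_ℓ ≤ ρ + C` for a constant `C` depending on `diam Y / M` (a path that goes up, across along
a geodesic of `Y`, and down is nearly optimal), and the four-point condition survives a bounded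
perturbation of the distance.
-/

def IsGromovHyperbolicOn {α : Type*} (d : α → α → ℝ) (s : Set α) (δ : ℝ) : Prop :=
  ∀ x ∈ s, ∀ y ∈ s, ∀ z ∈ s, ∀ t ∈ s,
    d x y + d z t ≤ max (d x z + d y t) (d x t + d y z) + 2 * δ

theorem IsGromovHyperbolicOn.mono {α : Type*} {d : α → α → ℝ} {s t : Set α} {δ : ℝ}
    (h : IsGromovHyperbolicOn d s δ) (hts : t ⊆ s) : IsGromovHyperbolicOn d t δ :=
  fun x hx y hy z hz w hw => h x (hts hx) y (hts hy) z (hts hz) w (hts hw)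

theorem IsGromovHyperbolicOn.of_le_of_le {α : Type*} {d d' : α → α → ℝ} {s : Set α}
    {δ C : ℝ} (h : IsGromovHyperbolicOn d' s δ) (hle : ∀ x ∈ s, ∀ y ∈ s, d' x y ≤ d x y)
    (hle' : ∀ x ∈ s, ∀ y ∈ s, d x y ≤ d' x y + C) :
    IsGromovHyperbolicOn d s (δ + C) := by
  intro x hx y hy z hz t ht
  have hmax : max (d' x z + d' y t) (d' x t + d' y z) ≤ max (d x z + d y t) (d x t + d y z) :=
    max_le_max (add_le_add (hle x hx z hz) (hle y hy t ht))
      (add_le_add (hle x hx t ht) (hle y hy z hz))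
  linarith [h x hx y hy z hz t ht, hle' x hx y hy, hle' z hz t ht]

-- For `n = d x y`, `m = d z w`, `a = d x z`, `b = d y w`, `c = d x w`, `e = d y z` the hypotheses
-- are triangle inequalities, and the conclusion is a Ptolemy inequality with constant `4`.
theorem mul_le_four_mul_max {n m a b c e : ℝ} (hn : 0 ≤ n) (hm : 0 ≤ m) (hnae : n ≤ a + e)
    (hncb : n ≤ c + b) (hmac : m ≤ a + c) (hmbe : m ≤ b + e) :
    n * m ≤ 4 * max (a * b) (c * e) := by
  have hab := le_max_left (a * b) (c * e)
  have hce := le_max_right (a * b) (c * e)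
  rcases le_total a c with hac | hca <;> rcases le_total b e with hbe | heb
  · rcases le_total c e with h | h <;> nlinarith
  · rcases le_total a e with h | h <;> nlinarith
  · rcases le_total c b with h | h <;> nlinarith
  · rcases le_total a b with h | h <;> nlinarith

section BSAlgebra

variable {Y : Type*} [MetricSpace Y] {x y z w : Y × ℝ}

def bsGauge (x y : Y × ℝ) : ℝ := dist x.1 y.1 + max x.2 y.2

theorem bsGauge_comm (x y : Y × ℝ) : bsGauge x y = bsGauge y x := by
  rw [bsGauge, bsGauge, dist_comm, max_comm]

theorem bsGauge_pos (hx : 0 < x.2) : 0 < bsGauge x y :=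
  add_pos_of_nonneg_of_pos dist_nonneg (hx.trans_le (le_max_left _ _))

theorem bsGauge_le_add (hy : 0 < y.2) : bsGauge x z ≤ bsGauge x y + bsGauge y z := by
  have := dist_triangle x.1 y.1 z.1
  have : max x.2 z.2 ≤ max x.2 y.2 + max y.2 z.2 := by
    apply max_le <;> linarith [le_max_left x.2 y.2, le_max_right x.2 y.2,
      le_max_left y.2 z.2, le_max_right y.2 z.2]
  unfold bsGauge
  linarith

theorem mul_bsGauge_le (hy : 0 < y.2) :
    y.2 * bsGauge x z ≤ bsGauge x y * bsGauge y z := by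
  have hd := dist_triangle x.1 y.1 z.1
  have := le_max_left x.2 y.2
  have := le_max_right y.2 z.2
  have := le_max_right x.2 y.2
  have := le_max_left y.2 z.2
  have hmax : y.2 * max x.2 z.2 ≤ max x.2 y.2 * max y.2 z.2 := by
    rcases le_total x.2 z.2 with h | h
    · rw [max_eq_right h]; nlinarith
    · rw [max_eq_left h]; nlinarith
  unfold bsGauge
  nlinarith [dist_nonneg (x := x.1) (y := y.1), dist_nonneg (x := y.1) (y := z.1)]

theorem BS_eq (hx : 0 < x.2) (hy : 0 < y.2) :
    BS x y = 2 * Real.log (bsGauge x y) - Real.log x.2 - Real.log y.2 := by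
  rw [BS, ← bsGauge, Real.log_div (bsGauge_pos hx).ne' (Real.sqrt_pos.2 (mul_pos hx hy)).ne',
    Real.log_sqrt (mul_pos hx hy).le, Real.log_mul hx.ne' hy.ne']
  ring

theorem BS_comm (x y : Y × ℝ) : BS x y = BS y x := by
  rw [BS, BS, dist_comm, max_comm, mul_comm x.2]

theorem BS_self (hx : 0 < x.2) : BS x x = 0 := by
  rw [BS_eq hx hx, bsGauge, dist_self, max_self, zero_add]
  ring

theorem BS_nonneg (hx : 0 < x.2) (hy : 0 < y.2) : 0 ≤ BS x y := by
  have : x.2 * y.2 ≤ bsGauge x y ^ 2 := by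
    have := le_max_left x.2 y.2
    have := le_max_right x.2 y.2
    have : max x.2 y.2 ≤ bsGauge x y := le_add_of_nonneg_left dist_nonneg
    nlinarith
  have := Real.log_le_log (mul_pos hx hy) this
  rw [Real.log_mul hx.ne' hy.ne', Real.log_pow] at this
  rw [BS_eq hx hy]
  push_cast at this
  linarith

theorem BS_triangle (hx : 0 < x.2) (hy : 0 < y.2) (hz : 0 < z.2) :
    BS x z ≤ BS x y + BS y z := by
  have := Real.log_le_log (by have := bsGauge_pos (y := z) hx; positivity)
    (mul_bsGauge_le hy)
  rw [Real.log_mul hy.ne' (bsGauge_pos hx).ne',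
    Real.log_mul (bsGauge_pos hx).ne' (bsGauge_pos hy).ne'] at this
  rw [BS_eq hx hz, BS_eq hx hy, BS_eq hy hz]
  linarith

theorem bsGauge_mul_le_four_mul_max (hx : 0 < x.2) (hy : 0 < y.2) (hz : 0 < z.2)
    (hw : 0 < w.2) : bsGauge x y * bsGauge z w ≤
      4 * max (bsGauge x z * bsGauge y w) (bsGauge x w * bsGauge y z) := by
  refine mul_le_four_mul_max (bsGauge_pos hx).le (bsGauge_pos hz).le ?_ ?_ ?_ ?_
  · simpa only [bsGauge_comm z y] using bsGauge_le_add (x := x) (z := y) hz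
  · simpa only [bsGauge_comm w y] using bsGauge_le_add (x := x) (z := y) hw
  · simpa only [bsGauge_comm z x] using bsGauge_le_add (x := z) (z := w) hx
  · simpa only [bsGauge_comm z y, add_comm (bsGauge y z)] using
      bsGauge_le_add (x := z) (z := w) hy

theorem BS_isGromovHyperbolicOn :
    IsGromovHyperbolicOn (BS (Y := Y)) {x | 0 < x.2} (Real.log 4) := by
  intro x hx y hy z hz w hw
  have hxy := bsGauge_pos (y := y) hx
  have hzw := bsGauge_pos (y := w) hz
  have hxz := bsGauge_pos (y := z) hx
  have hyw := bsGauge_pos (y := w) hy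
  have hxw := bsGauge_pos (y := w) hx
  have hyz := bsGauge_pos (y := z) hy
  have hlog := Real.log_le_log (mul_pos hxy hzw) (bsGauge_mul_le_four_mul_max hx hy hz hw)
  rw [Real.log_mul hxy.ne' hzw.ne', Real.log_mul (by norm_num) (by positivity)] at hlog
  rcases le_total (bsGauge x z * bsGauge y w) (bsGauge x w * bsGauge y z) with h | h
  · have := le_max_right (BS x z + BS y w) (BS x w + BS y z)
    rw [max_eq_right h, Real.log_mul hxw.ne' hyz.ne'] at hlog
    simp only [BS_eq hx hy, BS_eq hz hw, BS_eq hx hz, BS_eq hy hw, BS_eq hx hw, BS_eq hy hz]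
      at this ⊢
    linarith
  · have := le_max_left (BS x z + BS y w) (BS x w + BS y z)
    rw [max_eq_left h, Real.log_mul hxz.ne' hyw.ne'] at hlog
    simp only [BS_eq hx hy, BS_eq hz hw, BS_eq hx hz, BS_eq hy hw, BS_eq hx hw, BS_eq hy hz]
      at this ⊢
    linarith

end BSAlgebra

-- On points of positive height `BS` is a pseudometric, which turns `lengthOn BS` into
-- `eVariationOn` and gives access to its additivity.
structure BSHalfSpace (Y : Type*) where
  point : Y × ℝ
  pos : 0 < point.2

noncomputable instance {Y : Type*} [MetricSpace Y] : PseudoMetricSpace (BSHalfSpace Y) where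
  dist x y := BS x.point y.point
  dist_self x := BS_self x.pos
  dist_comm x y := BS_comm _ _
  dist_triangle x y z := BS_triangle x.pos y.pos z.pos

theorem BSHalfSpace.dist_eq {Y : Type*} [MetricSpace Y] (x y : BSHalfSpace Y) :
    dist x y = BS x.point y.point := rfl

section Length

theorem ofReal_le_lengthOn {X : Type*} (d : X → X → ℝ) (γ : ℝ → X) {a b : ℝ} (hab : a ≤ b) :
    ENNReal.ofReal (d (γ a) (γ b)) ≤ lengthOn d γ (Icc a b) := by
  let u : ℕ → ℝ := fun i => if i = 0 then a else b
  have hu : Monotone u := monotone_nat_of_le_succ fun i => by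
    by_cases hi : i = 0 <;> simp [u, hi, hab]
  have hmem : ∀ i, u i ∈ Icc a b := fun i => by
    by_cases hi : i = 0 <;> simp [u, hi, hab]
  refine le_trans (le_of_eq ?_) (le_iSup _ (⟨1, u, hu, hmem⟩ :
    ℕ × { u : ℕ → ℝ // Monotone u ∧ ∀ i, u i ∈ Icc a b }))
  simp [u]

theorem lengthOn_BS_eq_eVariationOn {Y : Type*} [MetricSpace Y] (f : ℝ → BSHalfSpace Y)
    (S : Set ℝ) : lengthOn BS (fun u => (f u).point) S = eVariationOn f S := by
  refine iSup_congr fun p => Finset.sum_congr rfl fun i _ => ?_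
  rw [edist_dist, BSHalfSpace.dist_eq, BS_comm]

theorem eVariationOn_le_of_edist_le {α E F : Type*} [LinearOrder α] [PseudoEMetricSpace E]
    [PseudoEMetricSpace F] {f : α → E} {g : α → F} {s : Set α}
    (h : ∀ x ∈ s, ∀ y ∈ s, edist (f x) (f y) ≤ edist (g x) (g y)) :
    eVariationOn f s ≤ eVariationOn g s :=
  iSup_mono fun p => Finset.sum_le_sum fun _ _ => h _ (p.2.2.2 _) _ (p.2.2.2 _)

theorem eVariationOn_Icc_le_of_dist_le {E : Type*} [PseudoMetricSpace E] {f : ℝ → E}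
    {φ : ℝ → ℝ} {a b : ℝ} (hab : a ≤ b)
    (h : ∀ u ∈ Icc a b, ∀ v ∈ Icc a b, u ≤ v → dist (f u) (f v) ≤ φ v - φ u) :
    eVariationOn f (Icc a b) ≤ ENNReal.ofReal (φ b - φ a) := by
  have hφ : MonotoneOn φ (Icc a b) := fun u hu v hv huv =>
    sub_nonneg.1 (dist_nonneg.trans (h u hu v hv huv))
  have hle : ∀ u ∈ Icc a b, ∀ v ∈ Icc a b, u ≤ v → edist (f u) (f v) ≤ edist (φ u) (φ v) :=
    fun u hu v hv huv => by
      rw [edist_dist, edist_dist, Real.dist_eq, abs_sub_comm,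
        abs_of_nonneg (sub_nonneg.2 (hφ hu hv huv))]
      exact ENNReal.ofReal_le_ofReal (h u hu v hv huv)
  calc eVariationOn f (Icc a b) ≤ eVariationOn φ (Icc a b) :=
        eVariationOn_le_of_edist_le fun u hu v hv => (le_total u v).elim (hle u hu v hv)
          fun hvu => by rw [edist_comm, edist_comm (φ u)]; exact hle v hv u hu hvu
    _ ≤ ENNReal.ofReal (φ b - φ a) := by
        simpa using (hφ.eVariationOn_eq (left_mem_Icc.2 hab) (right_mem_Icc.2 hab)).le

variable {Y : Type*} [MetricSpace Y] {f : ℝ → BSHalfSpace Y} {a b : ℝ}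

theorem BS_vertical {p : Y} {s t : ℝ} (hs : 0 < s) (ht : 0 < t) (hst : s ≤ t) :
    BS (p, s) (p, t) = Real.log t - Real.log s := by
  rw [BS_eq hs ht, bsGauge, dist_self, zero_add, max_eq_right hst]
  ring

theorem BS_horizontal_le {p q : Y} {h : ℝ} (hh : 0 < h) :
    BS (p, h) (q, h) ≤ 2 * dist p q / h := by
  rw [BS_eq hh hh, bsGauge, max_self]
  have := Real.log_le_sub_one_of_pos (show 0 < (dist p q + h) / h by positivity)
  rw [Real.log_div (by positivity) hh.ne', add_div, div_self hh.ne'] at this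
  have : 2 * dist p q / h = 2 * (dist p q / h) := by ring
  linarith

theorem eVariationOn_le_of_vertical_monotoneOn (hab : a ≤ b) {p : Y} {H : ℝ → ℝ}
    (hf : ∀ u ∈ Icc a b, (f u).point = (p, H u)) (hH : MonotoneOn H (Icc a b)) :
    eVariationOn f (Icc a b) ≤ ENNReal.ofReal (Real.log (H b) - Real.log (H a)) := by
  have hpos : ∀ u ∈ Icc a b, 0 < H u := fun u hu => by simpa [hf u hu] using (f u).pos
  refine eVariationOn_Icc_le_of_dist_le (φ := fun u => Real.log (H u)) hab fun u hu v hv huv => ?_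
  rw [BSHalfSpace.dist_eq, hf u hu, hf v hv, BS_vertical (hpos u hu) (hpos v hv) (hH hu hv huv)]

theorem eVariationOn_le_of_vertical_antitoneOn (hab : a ≤ b) {p : Y} {H : ℝ → ℝ}
    (hf : ∀ u ∈ Icc a b, (f u).point = (p, H u)) (hH : AntitoneOn H (Icc a b)) :
    eVariationOn f (Icc a b) ≤ ENNReal.ofReal (Real.log (H a) - Real.log (H b)) := by
  have hpos : ∀ u ∈ Icc a b, 0 < H u := fun u hu => by simpa [hf u hu] using (f u).pos
  refine (eVariationOn_Icc_le_of_dist_le (φ := fun u => -Real.log (H u)) hab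
    fun u hu v hv huv => ?_).trans_eq (by rw [neg_sub_neg])
  rw [BSHalfSpace.dist_eq, hf u hu, hf v hv, BS_comm,
    BS_vertical (hpos v hv) (hpos u hu) (hH hu hv huv), neg_sub_neg]

theorem eVariationOn_le_of_horizontal (hab : a ≤ b) {g : ℝ → Y} {h K : ℝ}
    (hf : ∀ u ∈ Icc a b, (f u).point = (g u, h))
    (hg : ∀ u ∈ Icc a b, ∀ v ∈ Icc a b, u ≤ v → dist (g u) (g v) ≤ K * (v - u)) :
    eVariationOn f (Icc a b) ≤ ENNReal.ofReal (2 * K * (b - a) / h) := by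
  have hh : 0 < h := by simpa [hf a (left_mem_Icc.2 hab)] using (f a).pos
  refine (eVariationOn_Icc_le_of_dist_le (φ := fun u => 2 * K * u / h) hab
    fun u hu v hv huv => ?_).trans_eq (by ring_nf)
  rw [BSHalfSpace.dist_eq, hf u hu, hf v hv]
  calc BS (g u, h) (g v, h) ≤ 2 * dist (g u) (g v) / h := BS_horizontal_le hh
    _ ≤ 2 * (K * (v - u)) / h := by gcongr; exact hg u hu v hv huv
    _ = 2 * K * v / h - 2 * K * u / h := by ring

end Length

section TentPath

def ramp (u : ℝ) : ℝ := max 0 (min u 1)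

theorem ramp_of_nonpos {u : ℝ} (hu : u ≤ 0) : ramp u = 0 := by
  simp [ramp, min_le_of_left_le hu]

theorem ramp_of_one_le {u : ℝ} (hu : 1 ≤ u) : ramp u = 1 := by
  simp [ramp, hu]

theorem ramp_of_mem_Icc {u : ℝ} (hu : u ∈ Icc (0 : ℝ) 1) : ramp u = u := by
  simp [ramp, hu.1, hu.2]

theorem ramp_mem_Icc (u : ℝ) : ramp u ∈ Icc (0 : ℝ) 1 :=
  ⟨le_max_left _ _, max_le zero_le_one (min_le_right _ _)⟩

@[fun_prop]
theorem continuous_ramp : Continuous ramp := by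
  unfold ramp; fun_prop

variable {Y : Type*} {α : ℝ → Y} {d s t h : ℝ}

/-- The path on `[0, 3]` that rises vertically from height `s` to `h` over `α 0`, follows `α`
along `[0, d]` at height `h`, and descends vertically to height `t` over `α d`. -/
def tentPath (α : ℝ → Y) (d s t h u : ℝ) : Y × ℝ :=
  (α (d * ramp (u - 1)), s + (h - s) * ramp u + (t - h) * ramp (u - 2))

theorem tentPath_of_mem_Icc_zero_one {u : ℝ} (hu : u ∈ Icc (0 : ℝ) 1) :
    tentPath α d s t h u = (α 0, s + (h - s) * u) := by
  simp [tentPath, ramp_of_nonpos (by linarith [hu.2] : u - 1 ≤ 0),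
    ramp_of_nonpos (by linarith [hu.2] : u - 2 ≤ 0), ramp_of_mem_Icc hu]

theorem tentPath_of_mem_Icc_one_two {u : ℝ} (hu : u ∈ Icc (1 : ℝ) 2) :
    tentPath α d s t h u = (α (d * (u - 1)), h) := by
  simp [tentPath,
    ramp_of_mem_Icc (⟨by linarith [hu.1], by linarith [hu.2]⟩ : u - 1 ∈ Icc (0 : ℝ) 1),
    ramp_of_nonpos (by linarith [hu.2] : u - 2 ≤ 0), ramp_of_one_le hu.1]

theorem tentPath_of_mem_Icc_two_three {u : ℝ} (hu : u ∈ Icc (2 : ℝ) 3) :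
    tentPath α d s t h u = (α d, h + (t - h) * (u - 2)) := by
  simp [tentPath, ramp_of_one_le (by linarith [hu.1] : 1 ≤ u - 1),
    ramp_of_one_le (by linarith [hu.1] : 1 ≤ u),
    ramp_of_mem_Icc (⟨by linarith [hu.1], by linarith [hu.2]⟩ : u - 2 ∈ Icc (0 : ℝ) 1)]

theorem tentPath_zero : tentPath α d s t h 0 = (α 0, s) := by
  simp [tentPath_of_mem_Icc_zero_one (left_mem_Icc.2 zero_le_one)]

theorem tentPath_three : tentPath α d s t h 3 = (α d, t) := by
  simp [tentPath_of_mem_Icc_two_three (⟨by norm_num, le_rfl⟩ : (3 : ℝ) ∈ Icc (2 : ℝ) 3)]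
  norm_num

theorem tentPath_snd_mem (hs : 0 < s) (ht : 0 < t) (hsh : s ≤ h) (hth : t ≤ h) (u : ℝ) :
    (tentPath α d s t h u).2 ∈ Ioc 0 h := by
  obtain ⟨h0, h1⟩ := ramp_mem_Icc u
  obtain ⟨h2, h3⟩ := ramp_mem_Icc (u - 2)
  rcases le_total u 2 with hu | hu
  · simp only [tentPath, ramp_of_nonpos (by linarith : u - 2 ≤ 0)]
    constructor <;> nlinarith
  · simp only [tentPath, ramp_of_one_le (by linarith : 1 ≤ u)]
    constructor <;> nlinarith

theorem continuous_tentPath [TopologicalSpace Y] (hα : ContinuousOn α (Icc 0 d)) (hd : 0 ≤ d) :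
    Continuous (tentPath α d s t h) := by
  refine Continuous.prodMk (hα.comp_continuous (by fun_prop) fun u => ?_) ?_
  · obtain ⟨h0, h1⟩ := ramp_mem_Icc (u - 1)
    exact ⟨mul_nonneg hd h0, mul_le_of_le_one_right hd h1⟩
  · fun_prop

end TentPath

section TentPathLength

variable {Y : Type*} [MetricSpace Y] {α : ℝ → Y} {d s t h : ℝ}

theorem eVariationOn_Icc_add_Icc_add_Icc {E : Type*} [PseudoEMetricSpace E] (f : ℝ → E)
    {a b c e : ℝ} (hab : a ≤ b) (hbc : b ≤ c) (hce : c ≤ e) :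
    eVariationOn f (Icc a e) =
      eVariationOn f (Icc a b) + eVariationOn f (Icc b c) + eVariationOn f (Icc c e) := by
  have := eVariationOn.Icc_add_Icc f (s := univ) hab hbc (mem_univ _)
  have := eVariationOn.Icc_add_Icc f (s := univ) (hab.trans hbc) hce (mem_univ _)
  simp_all only [univ_inter]

theorem lengthOn_tentPath_le (hα : LipschitzOnWith 1 α (Icc 0 d)) (hd : 0 ≤ d)
    (hs : 0 < s) (ht : 0 < t) (hsh : s ≤ h) (hth : t ≤ h) :
    lengthOn BS (tentPath α d s t h) (Icc 0 3) ≤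
      ENNReal.ofReal (Real.log h - Real.log s + 2 * (d / h) + (Real.log h - Real.log t)) := by
  set f := fun u => (⟨tentPath α d s t h u, (tentPath_snd_mem hs ht hsh hth u).1⟩ :
    BSHalfSpace Y)
  have hrise : eVariationOn f (Icc 0 1) ≤ ENNReal.ofReal (Real.log h - Real.log s) := by
    refine (eVariationOn_le_of_vertical_monotoneOn zero_le_one (H := fun u => s + (h - s) * u)
      (fun u hu => tentPath_of_mem_Icc_zero_one hu) fun u _ v _ huv => ?_).trans_eq ?_
    · dsimp only; nlinarith
    · norm_num
  have hcross : eVariationOn f (Icc 1 2) ≤ ENNReal.ofReal (2 * (d / h)) := by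
    refine (eVariationOn_le_of_horizontal one_le_two (g := fun u => α (d * (u - 1))) (K := d)
      (fun u hu => tentPath_of_mem_Icc_one_two hu) fun u hu v hv huv => ?_).trans_eq ?_
    · have hmem : ∀ w ∈ Icc (1 : ℝ) 2, d * (w - 1) ∈ Icc 0 d := fun w hw =>
        ⟨mul_nonneg hd (by linarith [hw.1]), mul_le_of_le_one_right hd (by linarith [hw.2])⟩
      calc dist (α (d * (u - 1))) (α (d * (v - 1)))
          ≤ 1 * dist (d * (u - 1)) (d * (v - 1)) := hα.dist_le_mul _ (hmem u hu) _ (hmem v hv)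
        _ = d * (v - u) := by
          rw [one_mul, Real.dist_eq, abs_sub_comm, abs_of_nonneg (by nlinarith)]; ring
    · congr 1; ring
  have hfall : eVariationOn f (Icc 2 3) ≤ ENNReal.ofReal (Real.log h - Real.log t) := by
    refine (eVariationOn_le_of_vertical_antitoneOn (by norm_num)
      (H := fun u => h + (t - h) * (u - 2))
      (fun u hu => tentPath_of_mem_Icc_two_three hu) fun u _ v _ huv => ?_).trans_eq ?_
    · dsimp only; nlinarith
    · norm_num
  have hlog_s : 0 ≤ Real.log h - Real.log s := sub_nonneg.2 (Real.log_le_log hs hsh)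
  have hlog_t : 0 ≤ Real.log h - Real.log t := sub_nonneg.2 (Real.log_le_log ht hth)
  have hh : 0 < h := hs.trans_le hsh
  rw [show tentPath α d s t h = fun u => (f u).point from rfl, lengthOn_BS_eq_eVariationOn,
    eVariationOn_Icc_add_Icc_add_Icc f zero_le_one one_le_two (by norm_num),
    ENNReal.ofReal_add (by positivity) hlog_t, ENNReal.ofReal_add hlog_s (by positivity)]
  gcongr

end TentPathLength

theorem ENNReal.toReal_sInf_mem_Icc {S : Set ENNReal} {a b : ℝ} (ha : 0 ≤ a) (hb : 0 ≤ b)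
    (hlow : ∀ L ∈ S, ENNReal.ofReal a ≤ L) (hup : ∃ L ∈ S, L ≤ ENNReal.ofReal b) :
    (sInf S).toReal ∈ Icc a b := by
  obtain ⟨L, hL, hLb⟩ := hup
  have hSb : sInf S ≤ ENNReal.ofReal b := (sInf_le hL).trans hLb
  refine ⟨?_, ENNReal.toReal_le_of_le_ofReal hb hSb⟩
  simpa [ha] using ENNReal.toReal_mono (ne_top_of_le_ne_top ENNReal.ofReal_ne_top hSb)
    (le_sInf hlow)

section LengthMetric

variable {Y : Type*} [MetricSpace Y] {M : ℝ} {x y : Y × ℝ}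

def pathLengths (M : ℝ) (x y : Y × ℝ) : Set ENNReal :=
  {L : ENNReal | ∃ (a b : ℝ) (γ : ℝ → Y × ℝ), a ≤ b ∧
      ContinuousOn γ (Icc a b) ∧ γ a = x ∧ γ b = y ∧
      (∀ t ∈ Icc a b, inXM M (γ t)) ∧
      lengthOn (BS (Y := Y)) γ (Icc a b) = L}

theorem dLen_eq_toReal_sInf (M : ℝ) (x y : Y × ℝ) :
    dLen M x y = (sInf (pathLengths M x y)).toReal := rfl

theorem ofReal_BS_le_of_mem_pathLengths {L : ENNReal} (hL : L ∈ pathLengths M x y) :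
    ENNReal.ofReal (BS x y) ≤ L := by
  obtain ⟨a, b, γ, hab, -, rfl, rfl, -, rfl⟩ := hL
  exact ofReal_le_lengthOn BS γ hab

theorem lengthOn_tentPath_mem_pathLengths {α : ℝ → Y} {d h : ℝ}
    (hα : LipschitzOnWith 1 α (Icc 0 d)) (hd : 0 ≤ d) (hα0 : α 0 = x.1) (hαd : α d = y.1)
    (hx : 0 < x.2) (hy : 0 < y.2) (hxh : x.2 ≤ h) (hyh : y.2 ≤ h) (hhM : h ≤ M) :
    lengthOn BS (tentPath α d x.2 y.2 h) (Icc 0 3) ∈ pathLengths M x y := by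
  refine ⟨0, 3, _, by norm_num, (continuous_tentPath hα.continuousOn hd).continuousOn,
    by rw [tentPath_zero, hα0], by rw [tentPath_three, hαd], fun u _ => ?_, rfl⟩
  obtain ⟨hpos, hle⟩ := tentPath_snd_mem (α := α) (d := d) hx hy hxh hyh u
  exact ⟨hpos, hle.trans hhM⟩

theorem div_min_le_one_add_div {d m M D : ℝ} (hm : 0 ≤ m) (hd : 0 ≤ d) (hM : 0 < M)
    (hdD : d ≤ D) : d / min M (d + m) ≤ 1 + D / M := by
  rcases le_total M (d + m) with hc | hc
  · rw [min_eq_left hc]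
    linarith [div_le_div_of_nonneg_right hdD hM.le, div_nonneg hd hM.le]
  · rw [min_eq_right hc]
    linarith [div_le_one_of_le₀ (le_add_of_nonneg_right hm) (add_nonneg hd hm),
      div_nonneg (hd.trans hdD) hM.le]

/-- The tent path at height `min M (dist x.1 y.1 + max x.2 y.2)` has length at most `BS x y` plus
its horizontal part, which is at most `2` when the height is not capped by `M` and at most
`2 D / M` when it is. -/
theorem exists_mem_pathLengths_le_BS_add (hgeo : GeodesicSpace Y) (hM : 0 < M)
    (hx : inXM M x) (hy : inXM M y) {D : ℝ} (hD : ∀ p q : Y, dist p q ≤ D) :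
    ∃ L ∈ pathLengths M x y, L ≤ ENNReal.ofReal (BS x y + (2 + 2 * D / M)) := by
  obtain ⟨α, hα0, hαd, hαiso⟩ := hgeo x.1 y.1
  set d := dist x.1 y.1
  set h := min M (d + max x.2 y.2)
  have hmax : max x.2 y.2 ≤ h := le_min (max_le hx.2 hy.2) (le_add_of_nonneg_left dist_nonneg)
  have hxh : x.2 ≤ h := (le_max_left _ _).trans hmax
  have hyh : y.2 ≤ h := (le_max_right _ _).trans hmax
  have hα : LipschitzOnWith 1 α (Icc 0 d) := LipschitzOnWith.of_dist_le_mul fun a ha b hb => by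
    rw [hαiso a ha b hb, NNReal.coe_one, one_mul, Real.dist_eq]
  refine ⟨_, lengthOn_tentPath_mem_pathLengths hα dist_nonneg hα0 hαd hx.1 hy.1 hxh hyh
    (min_le_left _ _), (lengthOn_tentPath_le hα dist_nonneg hx.1 hy.1 hxh hyh).trans
    (ENNReal.ofReal_le_ofReal ?_)⟩
  have hcross : d / h ≤ 1 + D / M := div_min_le_one_add_div
    (hx.1.le.trans (le_max_left _ _)) dist_nonneg hM (hD x.1 y.1)
  have hlog : Real.log h ≤ Real.log (bsGauge x y) :=
    Real.log_le_log (hx.1.trans_le hxh) (min_le_right _ _)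
  rw [BS_eq hx.1 hy.1, mul_div_assoc]
  linarith

theorem dLen_mem_Icc (hgeo : GeodesicSpace Y) (hM : 0 < M) (hx : inXM M x) (hy : inXM M y)
    {D : ℝ} (hD : ∀ p q : Y, dist p q ≤ D) :
    dLen M x y ∈ Icc (BS x y) (BS x y + (2 + 2 * D / M)) := by
  have hD0 : 0 ≤ D := (dist_nonneg (x := x.1) (y := y.1)).trans (hD x.1 y.1)
  have hBS := BS_nonneg hx.1 hy.1
  rw [dLen_eq_toReal_sInf]
  exact ENNReal.toReal_sInf_mem_Icc hBS (by positivity) (fun _ => ofReal_BS_le_of_mem_pathLengths)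
    (exists_mem_pathLengths_le_BS_add hgeo hM hx hy hD)

theorem dLen_isGromovHyperbolicOn (hgeo : GeodesicSpace Y) (hM : 0 < M) {D : ℝ}
    (hD : ∀ p q : Y, dist p q ≤ D) :
    IsGromovHyperbolicOn (dLen M) {x : Y × ℝ | inXM M x} (Real.log 4 + (2 + 2 * D / M)) :=
  ((BS_isGromovHyperbolicOn (Y := Y)).mono fun _ hx => hx.1).of_le_of_le
    (fun _ hx _ hy => (dLen_mem_Icc hgeo hM hx hy hD).1)
    (fun _ hx _ hy => (dLen_mem_Icc hgeo hM hx hy hD).2)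

end LengthMetric

/-- on a compact geodesic space `Y`, the space `X_M = Y × (0, M]`
with the induced length metric is hyperbolic in the sense of Gromov. -/
theorem stmt5 {Y : Type*} [MetricSpace Y] [CompactSpace Y] (hgeo : GeodesicSpace Y)
    {M : ℝ} (hM : 0 < M) :
    ∃ δ : ℝ, 0 ≤ δ ∧ ∀ x y z t : Y × ℝ, inXM M x → inXM M y → inXM M z → inXM M t →
      dLen M x y + dLen M z t ≤
        max (dLen M x z + dLen M y t) (dLen M x t + dLen M y z) + 2 * δ := by
  obtain ⟨D, hD0, hD⟩ : ∃ D, 0 ≤ D ∧ ∀ p q : Y, dist p q ≤ D :=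
    ⟨Metric.diam univ, Metric.diam_nonneg, fun p q =>
      Metric.dist_le_diam_of_mem isCompact_univ.isBounded (mem_univ p) (mem_univ q)⟩
  exact ⟨Real.log 4 + (2 + 2 * D / M), by positivity,
    fun x y z t hx hy hz ht => dLen_isGromovHyperbolicOn hgeo hM hD x hx y hy z hz t ht⟩
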